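/- For every k ≥ 0 and every finite alphabet Σ, every (2k+1)-piecewise testable language over Σ is definable by a TL[#←,#→] formula of depth at most k+1. -/

import Mathlib

mutual
  /-- Formulas of TL[#←,#→]. -/
  inductive TL2Formula (σ : Type) : Type
    | sym : σ → TL2Formula σ
    | lt : TL2Term σ → TL2Term σ → TL2Formula σ
    | not : TL2Formula σ → TL2Formula σ
    | and : TL2Formula σ → TL2Formula σ → TL2Formula σ
  /-- Terms of TL[#←,#→]. -/
  inductive TL2Term (σ : Type) : Type
    | countL : TL2Formula σ → TL2Term σ
    | countR : TL2Formula σ → TL2Term σ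
    | add : TL2Term σ → TL2Term σ → TL2Term σ
    | one : TL2Term σ
end

mutual
  /-- Satisfaction `w,i ⊨ φ` (positions are 0-indexed, `0 ≤ i < |w|`). -/
  def TL2Formula.sat {σ : Type} [DecidableEq σ] : TL2Formula σ → List σ → ℕ → Bool
    | .sym c, w, i => decide (w[i]? = some c)
    | .lt t₁ t₂, w, i => decide (TL2Term.val t₁ w i < TL2Term.val t₂ w i)
    | .not φ, w, i => !(TL2Formula.sat φ w i)
    | .and φ₁ φ₂, w, i => TL2Formula.sat φ₁ w i && TL2Formula.sat φ₂ w i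
  /-- Value `t^{w,i}`: `#←[φ]` counts positions `j ≤ i` satisfying `φ`, and
  `#→[φ]` counts positions `i ≤ j < |w|` satisfying `φ`. -/
  def TL2Term.val {σ : Type} [DecidableEq σ] : TL2Term σ → List σ → ℕ → ℕ
    | .countL φ, w, i => ((List.range (i + 1)).filter (fun j => TL2Formula.sat φ w j)).length
    | .countR φ, w, i =>
        ((List.range w.length).filter (fun j => decide (i ≤ j) && TL2Formula.sat φ w j)).length
    | .add t₁ t₂, w, i => TL2Term.val t₁ w i + TL2Term.val t₂ w i
    | .one, _, _ => 1
end

mutual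
  /-- Nesting depth of `#←`/`#→` in a formula. -/
  def TL2Formula.depth {σ : Type} : TL2Formula σ → ℕ
    | .sym _ => 0
    | .lt t₁ t₂ => max (TL2Term.depth t₁) (TL2Term.depth t₂)
    | .not φ => TL2Formula.depth φ
    | .and φ₁ φ₂ => max (TL2Formula.depth φ₁) (TL2Formula.depth φ₂)
  /-- Nesting depth of `#←`/`#→` in a term. -/
  def TL2Term.depth {σ : Type} : TL2Term σ → ℕ
    | .countL φ => TL2Formula.depth φ + 1
    | .countR φ => TL2Formula.depth φ + 1
    | .add t₁ t₂ => max (TL2Term.depth t₁) (TL2Term.depth t₂)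
    | .one => 0
end

/-- `φ` defines `L`: a nonempty string is in `L` iff `φ` is satisfied at its last position. -/
def TL2Formula.defines {σ : Type} [DecidableEq σ] (φ : TL2Formula σ) (L : Set (List σ)) : Prop :=
  ∀ w : List σ, w ≠ [] → (w ∈ L ↔ φ.sat w (w.length - 1) = true)

/-- The J-expression `Σ* σ₁ Σ* σ₂ Σ* ⋯ Σ* σₘ Σ*` determined by the list `[σ₁, …, σₘ]`. -/
def Jexpr {σ : Type*} : List σ → Language σ
  | [] => ⊤
  | c :: rest => ⊤ * {[c]} * Jexpr rest

/-- Boolean combinations (union, intersection, complement) of a family `G` of sets. -/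
inductive BoolComb {α : Type*} (G : Set (Set α)) : Set α → Prop
  | base {s : Set α} : s ∈ G → BoolComb G s
  | compl {s : Set α} : BoolComb G s → BoolComb G sᶜ
  | union {s t : Set α} : BoolComb G s → BoolComb G t → BoolComb G (s ∪ t)
  | inter {s t : Set α} : BoolComb G s → BoolComb G t → BoolComb G (s ∩ t)

/-- A language is `k`-piecewise testable if it is a Boolean combination of
J-expressions each with at most `k` symbols. -/
def PiecewiseTestable {σ : Type*} (k : ℕ) (L : Language σ) : Prop :=
  BoolComb {M | ∃ l : List σ, l.length ≤ k ∧ M = Jexpr l} L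

/-!
A J-expression with at most `2k + 1` letters splits as `u c v` with `|u|, |v| ≤ k`, and a word
contains `u c v` as a subsequence iff some position `j` carries `c`, with `u` a subsequence of the
part before `j` and `v` one of the part after `j`. Testing a subsequence of length `m` strictly
before (after) the current position takes `m` nested strict-past (strict-future) existentials, and
each of these costs a single `#←` (`#→`): some position other than the current one satisfies `ψ`
iff `#[ψ] ≥ 2`, or `#[ψ] ≥ 1` and `ψ` fails here. One more `#←` at the last position guesses `j`,
and Boolean combinations do not increase the depth.
-/

open scoped List

namespace List

variable {α : Type*}

theorem cons_sublist_iff_exists_eq_append_cons {c : α} {v x : List α} :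
    c :: v <+ x ↔ ∃ x₁ x₂, x = x₁ ++ c :: x₂ ∧ v <+ x₂ := by
  constructor
  · rw [cons_sublist_iff]
    rintro ⟨r₁, r₂, rfl, hc, hv⟩
    obtain ⟨s, t, rfl⟩ := append_of_mem hc
    exact ⟨s, t ++ r₂, by simp, sublist_append_of_sublist_right hv⟩
  · rintro ⟨x₁, x₂, rfl, hv⟩
    exact (hv.cons_cons c).trans (sublist_append_right x₁ _)

theorem append_cons_sublist_iff {u v x : List α} {c : α} :
    u ++ c :: v <+ x ↔ ∃ x₁ x₂, x = x₁ ++ c :: x₂ ∧ u <+ x₁ ∧ v <+ x₂ := by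
  constructor
  · rw [append_sublist_iff]
    rintro ⟨r₁, r₂, rfl, hu, hcv⟩
    obtain ⟨s, t, rfl, hv⟩ := cons_sublist_iff_exists_eq_append_cons.mp hcv
    exact ⟨r₁ ++ s, t, by simp, sublist_append_of_sublist_left hu, hv⟩
  · rintro ⟨x₁, x₂, rfl, hu, hv⟩
    exact hu.append (hv.cons_cons c)

theorem exists_eq_append_cons_iff {x : List α} {c : α} {P : List α → List α → Prop} :
    (∃ x₁ x₂, x = x₁ ++ c :: x₂ ∧ P x₁ x₂) ↔
      ∃ j, x[j]? = some c ∧ P (x.take j) (x.drop (j + 1)) := by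
  constructor
  · rintro ⟨x₁, x₂, rfl, h⟩
    exact ⟨x₁.length, by simp, by simpa using h⟩
  · rintro ⟨j, hc, h⟩
    obtain ⟨hj, rfl⟩ := getElem?_eq_some_iff.mp hc
    exact ⟨_, _, (take_append_drop j x).symm.trans (by rw [drop_eq_getElem_cons hj]), h⟩

theorem length_filter_range_eq_card (p : ℕ → Bool) (n : ℕ) :
    ((range n).filter p).length = ((Finset.range n).filter (fun j => p j)).card := by
  rw [Finset.card_def, Finset.filter_val, Finset.range_val, Multiset.range, Multiset.filter_coe,
    Multiset.coe_card]
  simp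

theorem exists_eq_append_cons_of_length_le {l : List α} {k : ℕ} (hne : l ≠ [])
    (hlk : l.length ≤ 2 * k + 1) :
    ∃ u c v, l = u ++ c :: v ∧ u.length ≤ k ∧ v.length ≤ k := by
  have ha : min k (l.length - 1) < l.length := by
    have := length_pos_iff.mpr hne
    omega
  obtain ⟨u, v, heq, hu, hv⟩ := exists_eq_append_cons_iff
    (P := fun u v => u.length ≤ k ∧ v.length ≤ k) |>.mpr
    ⟨_, getElem?_eq_getElem ha, by simp, by simp; omega⟩
  exact ⟨u, _, v, heq, hu, hv⟩

end List

theorem Finset.exists_mem_ne_iff {α : Type*} (s : Finset α) (a : α) :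
    (∃ b ∈ s, b ≠ a) ↔ 1 < s.card ∨ (0 < s.card ∧ a ∉ s) := by
  constructor
  · rintro ⟨b, hb, hba⟩
    by_cases ha : a ∈ s
    · exact Or.inl (Finset.one_lt_card.mpr ⟨b, hb, a, ha, hba⟩)
    · exact Or.inr ⟨Finset.card_pos.mpr ⟨b, hb⟩, ha⟩
  · rintro (h | ⟨h, ha⟩)
    · exact Finset.exists_mem_ne h a
    · obtain ⟨b, hb⟩ := Finset.card_pos.mp h
      exact ⟨b, hb, fun hba => ha (hba ▸ hb)⟩

theorem mem_Jexpr {α : Type*} {l w : List α} : w ∈ Jexpr l ↔ l <+ w := by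
  induction l generalizing w with
  | nil => exact iff_of_true trivial (List.nil_sublist w)
  | cons c l ih =>
    simp only [Jexpr, Language.mem_mul, ih, List.cons_sublist_iff_exists_eq_append_cons]
    constructor
    · rintro ⟨_, ⟨x₁, -, _, rfl, rfl⟩, x₂, hl, rfl⟩
      exact ⟨x₁, x₂, by simp, hl⟩
    · rintro ⟨x₁, x₂, rfl, hl⟩
      exact ⟨x₁ ++ [c], ⟨x₁, trivial, [c], rfl, rfl⟩, x₂, hl, by simp⟩

namespace TL2Formula

variable {σ : Type}

def top : TL2Formula σ := .not (.lt .one .one)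

def or (φ ψ : TL2Formula σ) : TL2Formula σ := .not (.and (.not φ) (.not ψ))

def pos (t : TL2Term σ) : TL2Formula σ := .lt .one (.add t .one)

/-- When `t` counts the `ψ`-positions of a window containing the current one, this says some
other position of the window satisfies `ψ`. -/
def existsOther (t : TL2Term σ) (ψ : TL2Formula σ) : TL2Formula σ :=
  (lt .one t).or ((pos t).and ψ.not)

def existsUpTo (ψ : TL2Formula σ) : TL2Formula σ := pos (.countL ψ)

def existsBefore (ψ : TL2Formula σ) : TL2Formula σ := existsOther (.countL ψ) ψ

def existsAfter (ψ : TL2Formula σ) : TL2Formula σ := existsOther (.countR ψ) ψ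

def subseqBefore (u : List σ) : TL2Formula σ :=
  u.foldl (fun φ c => existsBefore ((sym c).and φ)) top

def subseqAfter (v : List σ) : TL2Formula σ :=
  v.foldr (fun c φ => existsAfter ((sym c).and φ)) top

@[simp] theorem depth_top : (top : TL2Formula σ).depth = 0 := rfl

@[simp] theorem depth_or (φ ψ : TL2Formula σ) : (φ.or ψ).depth = max φ.depth ψ.depth := rfl

theorem depth_existsBefore (ψ : TL2Formula σ) : (existsBefore ψ).depth = ψ.depth + 1 := by
  simp [existsBefore, existsOther, pos, depth, TL2Term.depth]

theorem depth_existsAfter (ψ : TL2Formula σ) : (existsAfter ψ).depth = ψ.depth + 1 := by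
  simp [existsAfter, existsOther, pos, depth, TL2Term.depth]

theorem depth_existsUpTo (ψ : TL2Formula σ) : (existsUpTo ψ).depth = ψ.depth + 1 := by
  simp [existsUpTo, pos, depth, TL2Term.depth]

theorem depth_subseqBefore (u : List σ) : (subseqBefore u).depth = u.length := by
  induction u using List.reverseRecOn with
  | nil => rfl
  | append_singleton u c ih =>
    simp [subseqBefore, depth_existsBefore, depth] at ih ⊢
    omega

theorem depth_subseqAfter (v : List σ) : (subseqAfter v).depth = v.length := by
  induction v with
  | nil => rfl
  | cons c v ih =>
    simp [subseqAfter, depth_existsAfter, depth] at ih ⊢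
    omega

section Semantics

variable [DecidableEq σ] (w : List σ) (i : ℕ)

@[simp] theorem sat_sym (c : σ) : (sym c).sat w i = true ↔ w[i]? = some c := by
  simp [sat]

@[simp] theorem sat_lt (t₁ t₂ : TL2Term σ) :
    (lt t₁ t₂).sat w i = true ↔ t₁.val w i < t₂.val w i := by
  simp [sat]

@[simp] theorem sat_not (φ : TL2Formula σ) : φ.not.sat w i = true ↔ ¬φ.sat w i = true := by
  simp [sat]

@[simp] theorem sat_and (φ ψ : TL2Formula σ) :
    (φ.and ψ).sat w i = true ↔ φ.sat w i = true ∧ ψ.sat w i = true := by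
  simp [sat]

@[simp] theorem sat_top : (top : TL2Formula σ).sat w i = true := by
  simp [top]

@[simp] theorem sat_or (φ ψ : TL2Formula σ) :
    (φ.or ψ).sat w i = true ↔ φ.sat w i = true ∨ ψ.sat w i = true := by
  simp [or, or_iff_not_and_not]

theorem val_countL (φ : TL2Formula σ) :
    (TL2Term.countL φ).val w i = ((Finset.range (i + 1)).filter (fun j => φ.sat w j)).card := by
  rw [TL2Term.val, List.length_filter_range_eq_card]

theorem val_countR (φ : TL2Formula σ) :
    (TL2Term.countR φ).val w i =
      ((Finset.range w.length).filter (fun j => i ≤ j ∧ φ.sat w j)).card := by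
  rw [TL2Term.val, List.length_filter_range_eq_card]
  simp

@[simp] theorem val_one : (TL2Term.one : TL2Term σ).val w i = 1 := rfl

@[simp] theorem val_add (t₁ t₂ : TL2Term σ) :
    (t₁.add t₂).val w i = t₁.val w i + t₂.val w i := rfl

theorem sat_pos (t : TL2Term σ) : (pos t).sat w i = true ↔ 0 < t.val w i := by
  simp [pos]

theorem sat_existsOther (t : TL2Term σ) (ψ : TL2Formula σ) :
    (existsOther t ψ).sat w i = true ↔
      1 < t.val w i ∨ (0 < t.val w i ∧ ¬ψ.sat w i = true) := by
  simp [existsOther, sat_pos]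

theorem sat_existsUpTo (ψ : TL2Formula σ) :
    (existsUpTo ψ).sat w i = true ↔ ∃ j ≤ i, ψ.sat w j = true := by
  simp [existsUpTo, sat_pos, val_countL, Finset.card_pos, Finset.Nonempty]

theorem sat_existsBefore (ψ : TL2Formula σ) :
    (existsBefore ψ).sat w i = true ↔ ∃ j < i, ψ.sat w j = true := by
  have hi : i ∉ (Finset.range (i + 1)).filter (fun j => ψ.sat w j) ↔ ¬ψ.sat w i = true := by
    simp
  rw [existsBefore, sat_existsOther, val_countL, ← hi, ← Finset.exists_mem_ne_iff]
  simp only [Finset.mem_filter, Finset.mem_range]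
  exact ⟨fun ⟨j, ⟨hj, hψ⟩, hji⟩ => ⟨j, by omega, hψ⟩,
    fun ⟨j, hj, hψ⟩ => ⟨j, ⟨by omega, hψ⟩, by omega⟩⟩

theorem sat_existsAfter (ψ : TL2Formula σ) :
    (existsAfter ψ).sat w i = true ↔ ∃ j, i < j ∧ j < w.length ∧ ψ.sat w j = true := by
  rw [existsAfter, sat_existsOther, val_countR]
  rcases lt_or_ge i w.length with hin | hin
  · have hi : i ∉ (Finset.range w.length).filter (fun j => i ≤ j ∧ ψ.sat w j) ↔
        ¬ψ.sat w i = true := by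
      simp [hin]
    rw [← hi, ← Finset.exists_mem_ne_iff]
    simp only [Finset.mem_filter, Finset.mem_range]
    exact ⟨fun ⟨j, ⟨hj, hij, hψ⟩, hji⟩ => ⟨j, by omega, hj, hψ⟩,
      fun ⟨j, hij, hj, hψ⟩ => ⟨j, ⟨hj, by omega, hψ⟩, by omega⟩⟩
  · have hempty : (Finset.range w.length).filter (fun j => i ≤ j ∧ ψ.sat w j) = ∅ := by
      ext j
      simp only [Finset.mem_filter, Finset.mem_range, Finset.notMem_empty, iff_false]
      omega
    rw [hempty, Finset.card_empty]
    exact iff_of_false (by simp) fun ⟨j, hij, hj, _⟩ => by omega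

theorem sat_subseqBefore (u : List σ) : (subseqBefore u).sat w i = true ↔ u <+ w.take i := by
  induction u using List.reverseRecOn generalizing i with
  | nil => simp [subseqBefore]
  | append_singleton u c ih =>
    rw [subseqBefore, List.foldl_append, ← subseqBefore, List.foldl_cons, List.foldl_nil,
      sat_existsBefore, List.append_cons_sublist_iff, List.exists_eq_append_cons_iff]
    simp only [sat_and, sat_sym, ih, List.getElem?_take, List.take_take, List.nil_sublist,
      and_true]
    constructor
    · rintro ⟨j, hji, hc, hu⟩
      exact ⟨j, by simpa [hji] using hc, by rwa [min_eq_left hji.le]⟩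
    · rintro ⟨j, hc, hu⟩
      have hji : j < i := by by_contra h; simp [h] at hc
      exact ⟨j, hji, by simpa [hji] using hc, by rwa [min_eq_left hji.le] at hu⟩

theorem sat_subseqAfter (v : List σ) : (subseqAfter v).sat w i = true ↔ v <+ w.drop (i + 1) := by
  induction v generalizing i with
  | nil => simp [subseqAfter]
  | cons c v ih =>
    rw [subseqAfter, List.foldr_cons, ← subseqAfter, sat_existsAfter,
      List.cons_sublist_iff_exists_eq_append_cons, List.exists_eq_append_cons_iff]
    simp only [sat_and, sat_sym, ih, List.getElem?_drop, List.drop_drop]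
    constructor
    · rintro ⟨j, hij, -, hc, hv⟩
      refine ⟨j - (i + 1), ?_, ?_⟩
      · rwa [Nat.add_sub_cancel' hij]
      · rwa [← Nat.add_assoc, Nat.add_sub_cancel' hij]
    · rintro ⟨j, hc, hv⟩
      refine ⟨i + 1 + j, by omega, (List.getElem?_eq_some_iff.mp hc).1, hc, ?_⟩
      rwa [← Nat.add_assoc] at hv

end Semantics

end TL2Formula

section Definability

variable {σ : Type} [DecidableEq σ]

def TL2Definable (d : ℕ) (L : Set (List σ)) : Prop :=
  ∃ φ : TL2Formula σ, φ.depth ≤ d ∧ φ.defines L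

namespace TL2Definable

variable {d : ℕ} {L M : Set (List σ)}

theorem compl (h : TL2Definable d L) : TL2Definable d Lᶜ := by
  obtain ⟨φ, hd, hφ⟩ := h
  exact ⟨φ.not, hd, fun w hw => by rw [Set.mem_compl_iff, hφ w hw]; simp⟩

theorem union (hL : TL2Definable d L) (hM : TL2Definable d M) : TL2Definable d (L ∪ M) := by
  obtain ⟨φ, hφd, hφ⟩ := hL
  obtain ⟨ψ, hψd, hψ⟩ := hM
  exact ⟨φ.or ψ, by simp [hφd, hψd], fun w hw => by simp [hφ w hw, hψ w hw]⟩

theorem inter (hL : TL2Definable d L) (hM : TL2Definable d M) : TL2Definable d (L ∩ M) := by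
  obtain ⟨φ, hφd, hφ⟩ := hL
  obtain ⟨ψ, hψd, hψ⟩ := hM
  exact ⟨φ.and ψ, by simp [TL2Formula.depth, hφd, hψd],
    fun w hw => by simp [hφ w hw, hψ w hw]⟩

theorem of_boolComb {G : Set (Set (List σ))} (hG : ∀ M ∈ G, TL2Definable d M)
    (hL : BoolComb G L) : TL2Definable d L := by
  induction hL with
  | base hM => exact hG _ hM
  | compl _ ih => exact ih.compl
  | union _ _ ih₁ ih₂ => exact ih₁.union ih₂
  | inter _ _ ih₁ ih₂ => exact ih₁.inter ih₂

end TL2Definable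

open TL2Formula in
theorem tl2Definable_Jexpr {k : ℕ} {l : List σ} (hl : l.length ≤ 2 * k + 1) :
    TL2Definable (k + 1) (Jexpr l) := by
  rcases eq_or_ne l [] with rfl | hne
  · exact ⟨top, by simp, fun w _ => iff_of_true trivial (by simp)⟩
  obtain ⟨u, c, v, rfl, hu, hv⟩ := List.exists_eq_append_cons_of_length_le hne hl
  refine ⟨existsUpTo ((sym c).and ((subseqBefore u).and (subseqAfter v))), ?_, fun w _ => ?_⟩
  · simp [depth_existsUpTo, depth, depth_subseqBefore, depth_subseqAfter, hu, hv]
  · change w ∈ Jexpr _ ↔ _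
    rw [mem_Jexpr, List.append_cons_sublist_iff, List.exists_eq_append_cons_iff, sat_existsUpTo]
    simp only [sat_and, sat_sym, sat_subseqBefore, sat_subseqAfter]
    exact ⟨fun ⟨j, hj⟩ =>
      ⟨j, Nat.le_sub_one_of_lt (List.getElem?_eq_some_iff.mp hj.1).1, hj⟩, fun ⟨j, _, hj⟩ => ⟨j, hj⟩⟩

end Definability

/-- Every `(2k+1)`-piecewise testable language over a finite alphabet is definable
by a TL[#←,#→] formula of depth at most `k+1`. -/
theorem stmt2 (σ : Type) [Fintype σ] [DecidableEq σ] (k : ℕ) (L : Language σ)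
    (hL : PiecewiseTestable (2 * k + 1) L) :
    ∃ φ : TL2Formula σ, φ.depth ≤ k + 1 ∧ φ.defines L := by
  refine TL2Definable.of_boolComb ?_ hL
  rintro _ ⟨l, hl, rfl⟩
  exact tl2Definable_Jexpr hl
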